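/- There exist universal constants C < ∞ and c₀ > 0 such that for all real numbers m, u, y, e with u ≤ y and ((y − m)₊ + 1)·|e| ≤ c₀, one has |Ψ(y − m − e)/Ψ(u − m − e) − Ψ(y − m)/Ψ(u − m)| ≤ C·((y − m)₊ + (u − m)₊ + 1)·|e|, where x₊ := max(x, 0). -/

import Mathlib

/-!
As a function of the mean `μ`, the ratio `Ψ(y - μ) / Ψ(u - μ)` has derivative
`φ(y - μ) / Ψ(u - μ) - (Ψ(y - μ) / Ψ(u - μ)) · φ(u - μ) / Ψ(u - μ)`, a difference of two
nonnegative terms. Since `u ≤ y`, the ratio lies in `[0, 1]` and both terms are controlled by the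
hazard-rate bound `φ(x) / Ψ(x) ≤ x₊ + 1` at `x = y - μ`. The mean value theorem on the segment
from `m` to `m + e` then gives the estimate, since `|e| ≤ 1` keeps `(y - μ)₊ ≤ (y - m)₊ + 1` on
it. The hazard-rate bound holds for `x ≥ 0` because `-φ(z) / (z + 1)` has derivative at
most `φ(z)` and vanishes at infinity, and for `x < 0` because `φ(x) ≤ φ(0) ≤ Ψ(0) ≤ Ψ(x)`.
-/

open MeasureTheory

/-- The standard normal density `φ(z) = (2π)^{-1/2} exp(−z²/2)`. -/
noncomputable def phi (x : ℝ) : ℝ := (Real.sqrt (2 * Real.pi))⁻¹ * Real.exp (-x ^ 2 / 2)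

/-- The standard Gaussian survival function `Ψ(x) = ∫_x^∞ φ(z) dz`. -/
noncomputable def Psi (x : ℝ) : ℝ := ∫ z in Set.Ioi x, phi z

open Set Filter Topology

lemma phi_pos (x : ℝ) : 0 < phi x := by
  unfold phi; positivity

lemma continuous_phi : Continuous phi := by
  unfold phi; fun_prop

lemma integrable_phi : Integrable phi := by
  have : phi = ProbabilityTheory.gaussianPDFReal 0 1 := by
    ext x; simp [phi, ProbabilityTheory.gaussianPDFReal]
  rw [this]
  exact ProbabilityTheory.integrable_gaussianPDFReal 0 1

lemma hasDerivAt_phi (x : ℝ) : HasDerivAt phi (-x * phi x) x := by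
  have h : HasDerivAt (fun z : ℝ => -z ^ 2 / 2) (-x) x :=
    ((hasDerivAt_pow 2 x).neg.div_const 2).congr_deriv (by ring)
  exact (h.exp.const_mul _).congr_deriv (by unfold phi; ring)

lemma tendsto_phi_atTop : Tendsto phi atTop (𝓝 0) := by
  have h : Tendsto (fun z : ℝ => -z ^ 2 / 2) atTop atBot :=
    (tendsto_neg_atBot_iff.2 (tendsto_pow_atTop two_ne_zero)).atBot_div_const two_pos
  have := (Real.tendsto_exp_atBot.comp h).const_mul (Real.sqrt (2 * Real.pi))⁻¹
  rwa [mul_zero] at this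

lemma phi_le_phi_zero (x : ℝ) : phi x ≤ phi 0 := by
  unfold phi
  gcongr _ * Real.exp ?_
  nlinarith [sq_nonneg x]

lemma Psi_pos (x : ℝ) : 0 < Psi x := by
  rw [Psi, setIntegral_pos_iff_support_of_nonneg_ae
    (ae_of_all _ fun z => (phi_pos z).le) integrable_phi.integrableOn]
  simp [Function.support_eq_univ fun z => (phi_pos z).ne']

lemma antitone_Psi : Antitone Psi := fun _ _ hst =>
  setIntegral_mono_set integrable_phi.integrableOn (ae_of_all _ fun z => (phi_pos z).le)
    (ae_of_all _ (Ioi_subset_Ioi hst))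

lemma hasDerivAt_Psi (x : ℝ) : HasDerivAt Psi (-phi x) x := by
  have hPsi : Psi = fun t => Psi 0 - ∫ z in (0 : ℝ)..t, phi z := by
    ext t
    rw [← intervalIntegral.integral_Ioi_sub_Ioi' integrable_phi.integrableOn
      integrable_phi.integrableOn, Psi, Psi, sub_sub_cancel]
  rw [hPsi]
  exact (intervalIntegral.integral_hasDerivAt_right (continuous_phi.intervalIntegrable 0 x)
    (continuous_phi.stronglyMeasurableAtFilter _ _) continuous_phi.continuousAt).const_sub _

lemma phi_div_add_one_le_Psi {x : ℝ} (hx : 0 ≤ x) : phi x / (x + 1) ≤ Psi x := by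
  set g' : ℝ → ℝ := fun z => phi z * ((z ^ 2 + z + 1) / (z + 1) ^ 2)
  have hderiv : ∀ z ∈ Ici x, HasDerivAt (fun z => -phi z / (z + 1)) (g' z) z := by
    intro z hz
    have hz1 : z + 1 ≠ 0 := by linarith [mem_Ici.1 hz]
    refine ((hasDerivAt_phi z).neg.div ((hasDerivAt_id z).add_const 1) hz1).congr_deriv ?_
    simp only [g', id, Pi.neg_apply]
    field_simp
    ring
  have hg'_nonneg : ∀ z ∈ Ioi x, 0 ≤ g' z := fun z hz => by
    have := (phi_pos z).le
    have : 0 ≤ z := hx.trans (mem_Ioi.1 hz).le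
    positivity
  have hg'_le : ∀ z ∈ Ioi x, g' z ≤ phi z := fun z hz => by
    have : 0 ≤ z := hx.trans (mem_Ioi.1 hz).le
    refine mul_le_of_le_one_right (phi_pos z).le ((div_le_one (by positivity)).2 ?_)
    nlinarith
  have hlim : Tendsto (fun z => -phi z / (z + 1)) atTop (𝓝 0) := by
    have := (tendsto_phi_atTop.neg.mul (tendsto_inv_atTop_zero.comp
      (tendsto_atTop_add_const_right _ 1 tendsto_id)))
    simpa [div_eq_mul_inv] using this
  have hint := integral_Ioi_of_hasDerivAt_of_nonneg' hderiv hg'_nonneg hlim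
  rw [zero_sub, neg_div, neg_neg] at hint
  rw [← hint]
  exact setIntegral_mono_on (integrableOn_Ioi_deriv_of_nonneg' hderiv hg'_nonneg hlim)
    integrable_phi.integrableOn measurableSet_Ioi hg'_le

lemma phi_div_Psi_le (x : ℝ) : phi x / Psi x ≤ max x 0 + 1 := by
  rw [div_le_iff₀ (Psi_pos x)]
  rcases le_total 0 x with hx | hx
  · rw [max_eq_left hx, mul_comm, ← div_le_iff₀ (by linarith)]
    exact phi_div_add_one_le_Psi hx
  · calc phi x ≤ phi 0 := phi_le_phi_zero x
      _ ≤ Psi 0 := by simpa using phi_div_add_one_le_Psi le_rfl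
      _ ≤ Psi x := antitone_Psi hx
      _ = (max x 0 + 1) * Psi x := by rw [max_eq_right hx, zero_add, one_mul]

/-- Survival function at `y` of the unit-variance Gaussian with mean `μ` truncated to `(u, ∞)`. -/
noncomputable def truncSurvival (u y μ : ℝ) : ℝ := Psi (y - μ) / Psi (u - μ)

lemma truncSurvival_nonneg (u y μ : ℝ) : 0 ≤ truncSurvival u y μ :=
  div_nonneg (Psi_pos _).le (Psi_pos _).le

lemma truncSurvival_le_one {u y : ℝ} (huy : u ≤ y) (μ : ℝ) : truncSurvival u y μ ≤ 1 :=
  div_le_one_of_le₀ (antitone_Psi (by linarith)) (Psi_pos _).le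

lemma hasDerivAt_truncSurvival (u y μ : ℝ) :
    HasDerivAt (truncSurvival u y)
      (phi (y - μ) / Psi (u - μ) - truncSurvival u y μ * (phi (u - μ) / Psi (u - μ))) μ := by
  have hPsi_comp (a : ℝ) : HasDerivAt (fun t => Psi (a - t)) (phi (a - μ)) μ := by
    simpa using (hasDerivAt_Psi (a - μ)).comp_const_sub a μ
  have hPsi_ne := (Psi_pos (u - μ)).ne'
  refine ((hPsi_comp y).div (hPsi_comp u) hPsi_ne).congr_deriv ?_
  rw [truncSurvival]
  field_simp

lemma abs_deriv_truncSurvival_le {u y : ℝ} (huy : u ≤ y) (μ : ℝ) :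
    |phi (y - μ) / Psi (u - μ) - truncSurvival u y μ * (phi (u - μ) / Psi (u - μ))| ≤
      max (y - μ) 0 + 1 := by
  have hy : phi (y - μ) / Psi (u - μ) ≤ max (y - μ) 0 + 1 :=
    (div_le_div_of_nonneg_left (phi_pos _).le (Psi_pos _) (antitone_Psi (by linarith))).trans
      (phi_div_Psi_le _)
  have hu : truncSurvival u y μ * (phi (u - μ) / Psi (u - μ)) ≤ max (y - μ) 0 + 1 :=
    calc truncSurvival u y μ * (phi (u - μ) / Psi (u - μ))
        ≤ phi (u - μ) / Psi (u - μ) :=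
          mul_le_of_le_one_left (div_nonneg (phi_pos _).le (Psi_pos _).le)
            (truncSurvival_le_one huy μ)
      _ ≤ max (u - μ) 0 + 1 := phi_div_Psi_le _
      _ ≤ max (y - μ) 0 + 1 := by gcongr
  exact abs_sub_le_of_nonneg_of_le (div_nonneg (phi_pos _).le (Psi_pos _).le) hy
    (mul_nonneg (truncSurvival_nonneg u y μ) (div_nonneg (phi_pos _).le (Psi_pos _).le)) hu

lemma abs_truncSurvival_add_sub_le {u y : ℝ} (huy : u ≤ y) (m e : ℝ) :
    |truncSurvival u y (m + e) - truncSurvival u y m| ≤ (max (y - m) 0 + |e| + 1) * |e| := by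
  have hbound : ∀ μ ∈ uIcc m (m + e),
      ‖phi (y - μ) / Psi (u - μ) - truncSurvival u y μ * (phi (u - μ) / Psi (u - μ))‖ ≤
        max (y - m) 0 + |e| + 1 := by
    intro μ hμ
    have hμm : |μ - m| ≤ |e| := by simpa using abs_sub_left_of_mem_uIcc hμ
    refine (abs_deriv_truncSurvival_le huy μ).trans ?_
    have : max (y - μ) 0 ≤ max (y - m) 0 + |e| :=
      max_le (by linarith [le_max_left (y - m) 0, neg_abs_le (μ - m)])
        (by linarith [le_max_right (y - m) 0, abs_nonneg e])
    linarith
  simpa using (convex_uIcc m (m + e)).norm_image_sub_le_of_norm_hasDerivWithin_le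
    (fun μ _ => (hasDerivAt_truncSurvival u y μ).hasDerivWithinAt) hbound left_mem_uIcc
    right_mem_uIcc

/-- stability of the truncated-Gaussian survival ratio under a small
perturbation `e` of the mean parameter. -/
theorem stmt18 :
    ∃ C c₀ : ℝ, 0 < c₀ ∧ ∀ m u y e : ℝ, u ≤ y →
      (max (y - m) 0 + 1) * |e| ≤ c₀ →
      |Psi (y - m - e) / Psi (u - m - e) - Psi (y - m) / Psi (u - m)| ≤
        C * (max (y - m) 0 + max (u - m) 0 + 1) * |e| := by
  refine ⟨2, 1, one_pos, fun m u y e huy hsmall => ?_⟩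
  have he : |e| ≤ 1 := by nlinarith [abs_nonneg e, le_max_right (y - m) 0]
  have key := abs_truncSurvival_add_sub_le huy m e
  simp only [truncSurvival, sub_add_eq_sub_sub] at key
  refine key.trans ?_
  gcongr
  linarith [le_max_right (y - m) 0, le_max_right (u - m) 0]
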